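/- arXiv:math/0305097 — 2 statements merged into one kernel-verified Lean document; each statement's English description precedes it below -/
import Mathlib

section
/- (Gronwall-type limit lemma) Let w ∈ L¹(0,1) with w ≥ 0 and ∫₀¹ w(s) ds < 1. Let f, g : (0,∞) → [0,∞) be bounded functions satisfying f(t) ≤ g(t) + ∫₀¹ w(s) f(st) ds for all t > 0. If lim_{t→∞} g(t) = 0, then lim_{t→∞} f(t) = 0. -/
open MeasureTheory Set Filter Topology

/-! Let `L = limsup f` and `C = ∫₀¹ w`. Any eventual bound `f ≤ a` improves to `f ≤ a C + η`:
split `∫₀¹ w(s) f(st) ds` at a small `δ`; the part over `(0, δ)` is at most `M ∫₀^δ w`, small by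
absolute continuity of the integral, while on `[δ, 1)` the argument `st ≥ δt` is eventually
beyond the point after which `f ≤ a`. Applied to `a = L + ε` this gives `L ≤ L C`, and `C < 1`
forces `L ≤ 0`. -/

lemma integrableOn_mul_comp_mul {w f : ℝ → ℝ} (hw_int : IntegrableOn w (Ioo 0 1))
    (hf_meas : Measurable f) {M : ℝ} (hf_bdd : ∀ u, 0 < u → |f u| ≤ M) {t : ℝ} (ht : 0 < t) :
    IntegrableOn (fun s => w s * f (s * t)) (Ioo 0 1) :=
  hw_int.mul_bdd (g := fun s => f (s * t))
    (hf_meas.comp (measurable_id.mul_const t)).aestronglyMeasurable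
    ((ae_restrict_iff' measurableSet_Ioo).2
      (Eventually.of_forall fun _ hs => hf_bdd _ (mul_pos hs.1 ht)))

lemma tendsto_volume_restrict_Ioo_zero (I : Set ℝ) :
    Tendsto (fun δ => volume.restrict I (Ioo 0 δ)) (𝓝[>] 0) (𝓝 0) := by
  have hofReal : Tendsto (fun δ : ℝ => ENNReal.ofReal δ) (𝓝[>] 0) (𝓝 0) := by
    simpa using (ENNReal.continuous_ofReal.tendsto 0).mono_left nhdsWithin_le_nhds
  refine tendsto_of_tendsto_of_tendsto_of_le_of_le tendsto_const_nhds hofReal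
    (fun _ => zero_le) fun δ => ?_
  calc volume.restrict I (Ioo 0 δ) ≤ volume (Ioo 0 δ) := Measure.restrict_apply_le I _
    _ = ENNReal.ofReal δ := by rw [Real.volume_Ioo, sub_zero]

lemma eventually_setIntegral_mul_comp_mul_le {w f : ℝ → ℝ} (hw_int : IntegrableOn w (Ioo 0 1))
    (hw_nonneg : ∀ s ∈ Ioo (0 : ℝ) 1, 0 ≤ w s) (hf_meas : Measurable f) {M : ℝ}
    (hf_bdd : ∀ u, 0 < u → |f u| ≤ M) {a : ℝ} (ha₀ : 0 ≤ a) (ha : ∀ᶠ u in atTop, f u ≤ a)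
    {η : ℝ} (hη : 0 < η) :
    ∀ᶠ t in atTop, ∫ s in Ioo (0 : ℝ) 1, w s * f (s * t) ≤ a * (∫ s in Ioo (0 : ℝ) 1, w s) + η := by
  set μ := volume.restrict (Ioo (0 : ℝ) 1)
  have mono_on {S : Set ℝ} {h₁ h₂ : ℝ → ℝ} (hS : MeasurableSet S) (h₁_int : Integrable h₁ μ)
      (h₂_int : Integrable h₂ μ) (h : ∀ s ∈ Ioo (0 : ℝ) 1, s ∈ S → h₁ s ≤ h₂ s) :
      ∫ s in S, h₁ s ∂μ ≤ ∫ s in S, h₂ s ∂μ :=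
    setIntegral_mono_ae_restrict h₁_int.integrableOn h₂_int.integrableOn
      ((ae_restrict_iff' hS).2 ((ae_restrict_iff' measurableSet_Ioo).2 (Eventually.of_forall h)))
  obtain ⟨δ, hδ_small, hδ⟩ : ∃ δ, ∫ s in Ioo 0 δ, M * w s ∂μ < η ∧ 0 < δ :=
    ((((hw_int.const_mul M).tendsto_setIntegral_nhds_zero
      (tendsto_volume_restrict_Ioo_zero _)).eventually (gt_mem_nhds hη)).and
      self_mem_nhdsWithin).exists
  obtain ⟨T, hT⟩ := eventually_atTop.1 ha
  filter_upwards [eventually_gt_atTop 0,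
    (tendsto_id.const_mul_atTop hδ).eventually_ge_atTop T] with t ht hδt
  have hint := integrableOn_mul_comp_mul hw_int hf_meas hf_bdd ht
  have near : ∫ s in Ioo 0 δ, w s * f (s * t) ∂μ ≤ ∫ s in Ioo 0 δ, M * w s ∂μ :=
    mono_on measurableSet_Ioo hint (hw_int.const_mul M) fun s hs _ => by
      nlinarith [hw_nonneg s hs, (abs_le.1 (hf_bdd _ (mul_pos hs.1 ht))).2]
  have far : ∫ s in (Ioo 0 δ)ᶜ, w s * f (s * t) ∂μ ≤ ∫ s in (Ioo 0 δ)ᶜ, a * w s ∂μ :=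
    mono_on measurableSet_Ioo.compl hint (hw_int.const_mul a) fun s hs hsδ => by
      have hδs : δ ≤ s := le_of_not_gt fun h => hsδ ⟨hs.1, h⟩
      have hf_le := hT (s * t) (hδt.trans (mul_le_mul_of_nonneg_right hδs ht.le))
      nlinarith [hw_nonneg s hs]
  have whole : ∫ s in (Ioo 0 δ)ᶜ, a * w s ∂μ ≤ a * ∫ s, w s ∂μ := by
    rw [integral_const_mul]
    exact mul_le_mul_of_nonneg_left (setIntegral_le_integral hw_int
      ((ae_restrict_iff' measurableSet_Ioo).2 (Eventually.of_forall hw_nonneg))) ha₀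
  rw [← integral_add_compl measurableSet_Ioo hint]
  linarith

lemma limsup_nonpos_of_eventually_le_mul_add {ι : Type*} {l : Filter ι} {u : ι → ℝ} {C : ℝ}
    (hC : C < 1) (hbdd : IsBoundedUnder (· ≤ ·) l u) (hcobdd : IsCoboundedUnder (· ≤ ·) l u)
    (h : ∀ a, (∀ᶠ i in l, u i ≤ a) → ∀ η > 0, ∀ᶠ i in l, u i ≤ a * C + η) :
    limsup u l ≤ 0 := by
  set L := limsup u l
  have step : ∀ ε > 0, L * (1 - C) ≤ ε * (C + 1) := fun ε hε => by
    have hlt := eventually_lt_of_limsup_lt (lt_add_of_pos_right L hε) hbdd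
    have hL_le := limsup_le_of_le hcobdd (h (L + ε) (hlt.mono fun _ => le_of_lt) ε hε)
    linarith
  have hlim : Tendsto (fun ε : ℝ => ε * (C + 1)) (𝓝[>] 0) (𝓝 0) :=
    ((continuous_id.mul continuous_const).tendsto' 0 0 (zero_mul _)).mono_left
      nhdsWithin_le_nhds
  have hL_mul : L * (1 - C) ≤ 0 := ge_of_tendsto hlim (eventually_nhdsWithin_of_forall step)
  nlinarith

theorem gronwall_type_limit_lemma_general
    (w f g : ℝ → ℝ)
    (hw_int : IntegrableOn w (Ioo 0 1) volume)
    (hw_nonneg : ∀ s ∈ Ioo (0 : ℝ) 1, 0 ≤ w s)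
    (hw_lt : ∫ s in Ioo (0 : ℝ) 1, w s < 1)
    (hf_meas : Measurable f)
    (hf_nonneg : ∀ t : ℝ, 0 < t → 0 ≤ f t)
    (hf_bdd : ∃ M : ℝ, ∀ t : ℝ, 0 < t → f t ≤ M)
    (hineq : ∀ t : ℝ, 0 < t → f t ≤ g t + ∫ s in Ioo (0 : ℝ) 1, w s * f (s * t))
    (hg_lim : Tendsto g atTop (nhds 0)) :
    Tendsto f atTop (nhds 0) := by
  obtain ⟨M, hM⟩ := hf_bdd
  have hf_abs : ∀ t, 0 < t → |f t| ≤ M := fun t ht =>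
    abs_le.2 ⟨by linarith [hf_nonneg t ht, hf_nonneg 1 one_pos, hM 1 one_pos], hM t ht⟩
  have hf_ev_nonneg : ∀ᶠ t in atTop, 0 ≤ f t :=
    (eventually_gt_atTop 0).mono hf_nonneg
  have hub : IsBoundedUnder (· ≤ ·) atTop f :=
    ⟨M, eventually_map.2 ((eventually_gt_atTop 0).mono hM)⟩
  have hlb : IsBoundedUnder (· ≥ ·) atTop f := ⟨0, eventually_map.2 hf_ev_nonneg⟩
  have hlimsup : limsup f atTop ≤ 0 := by
    refine limsup_nonpos_of_eventually_le_mul_add hw_lt hub hlb.isCoboundedUnder_le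
      fun a ha η hη => ?_
    have ha₀ : 0 ≤ a := ((hf_ev_nonneg.and ha).exists).elim fun t ht => ht.1.trans ht.2
    filter_upwards [eventually_gt_atTop 0, hg_lim.eventually (eventually_le_nhds (half_pos hη)),
      eventually_setIntegral_mul_comp_mul_le hw_int hw_nonneg hf_meas hf_abs ha₀ ha
        (half_pos hη)] with t ht hg hI
    linarith [hineq t ht]
  exact tendsto_of_le_liminf_of_limsup_le (le_liminf_of_le hub.isCoboundedUnder_ge hf_ev_nonneg)
    hlimsup hub hlb

/-- Gronwall-type limit lemma: if `w ∈ L¹(0,1)` is nonnegative with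
`∫₀¹ w < 1`, and the bounded nonnegative measurable functions `f, g` satisfy
`f(t) ≤ g(t) + ∫₀¹ w(s) f(st) ds` for all `t > 0`, then `g(t) → 0` as `t → ∞`
implies `f(t) → 0` as `t → ∞`. -/
theorem gronwall_type_limit_lemma
    (w f g : ℝ → ℝ)
    (hw_int : IntegrableOn w (Ioo 0 1) volume)
    (hw_nonneg : ∀ s ∈ Ioo (0 : ℝ) 1, 0 ≤ w s)
    (hw_lt : ∫ s in Ioo (0 : ℝ) 1, w s < 1)
    (hf_meas : Measurable f)
    (hf_nonneg : ∀ t : ℝ, 0 < t → 0 ≤ f t)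
    (hg_nonneg : ∀ t : ℝ, 0 < t → 0 ≤ g t)
    (hf_bdd : ∃ M : ℝ, ∀ t : ℝ, 0 < t → f t ≤ M)
    (hg_bdd : ∃ M : ℝ, ∀ t : ℝ, 0 < t → g t ≤ M)
    (hineq : ∀ t : ℝ, 0 < t → f t ≤ g t + ∫ s in Ioo (0 : ℝ) 1, w s * f (s * t))
    (hg_lim : Tendsto g atTop (nhds 0)) :
    Tendsto f atTop (nhds 0) :=
  gronwall_type_limit_lemma_general w f g hw_int hw_nonneg hw_lt hf_meas hf_nonneg hf_bdd hineq
    hg_lim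
end

section
/- (Convolution approximation estimate) There exists a constant C such that for all f ∈ L¹(ℝⁿ, (1+|x|)dx) and all g ∈ W^{1,1}(ℝⁿ), ‖f*g − (∫_{ℝⁿ} f dx) g‖_{L¹} ≤ C ‖∇g‖_{L¹} ‖f‖_{L¹(ℝⁿ, |x| dx)}. -/
/-!
Writing `f * g - (∫ f) g = ∫ f(y) (g(· - y) - g) dy`, the estimate reduces to the translation
bound `‖g(· - y) - g‖_{L¹} ≤ |y| ‖∇g‖_{L¹}`. That bound follows from the fundamental theorem of
calculus along the segment from `x` to `x - y`, integrated in `x` with Tonelli and the translation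
invariance of Lebesgue measure. The constant is `C = 1`.
-/

open MeasureTheory Set
open scoped ENNReal

variable {E F : Type*} [NormedAddCommGroup E] [NormedSpace ℝ E]
  [NormedAddCommGroup F] [NormedSpace ℝ F] [CompleteSpace F]

theorem enorm_sub_le_lintegral_enorm_deriv {f : ℝ → F} (hf : Differentiable ℝ f) {a b : ℝ}
    (hab : a ≤ b) : ‖f b - f a‖ₑ ≤ ∫⁻ t in Ioc a b, ‖deriv f t‖ₑ := by
  by_cases hfin : ∫⁻ t in Ioc a b, ‖deriv f t‖ₑ = ∞
  · simp [hfin]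
  have hint : IntervalIntegrable (fun t => ‖deriv f t‖) volume a b := by
    rw [intervalIntegrable_iff_integrableOn_Ioc_of_le hab]
    exact ⟨(aestronglyMeasurable_deriv f _).norm, by
      simpa [HasFiniteIntegral, enorm_norm] using Ne.lt_top hfin⟩
  have hle := norm_sub_le_integral_of_norm_deriv_le_of_le hab hf.continuous.continuousOn
    hf.differentiableOn (.of_forall fun t _ => le_rfl) hint
  rw [intervalIntegral.integral_of_le hab,
    integral_norm_eq_lintegral_enorm (aestronglyMeasurable_deriv f _)] at hle
  rw [← ofReal_norm]
  exact ENNReal.ofReal_le_of_le_toReal hle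

theorem enorm_add_sub_le_mul_lintegral_fderiv {g : E → F} (hg : Differentiable ℝ g) (x v : E) :
    ‖g (x + v) - g x‖ₑ ≤ ‖v‖ₑ * ∫⁻ t in Ioc (0 : ℝ) 1, ‖fderiv ℝ g (x + t • v)‖ₑ := by
  have hline : ∀ t : ℝ, HasDerivAt (fun t : ℝ => g (x + t • v)) (fderiv ℝ g (x + t • v) v) t :=
    fun t => (hg _).hasFDerivAt.comp_hasDerivAt t
      (by simpa using ((hasDerivAt_id t).smul_const v).const_add x)
  calc ‖g (x + v) - g x‖ₑ
      ≤ ∫⁻ t in Ioc (0 : ℝ) 1, ‖fderiv ℝ g (x + t • v) v‖ₑ := by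
        simpa [(hline _).deriv] using enorm_sub_le_lintegral_enorm_deriv
          (fun t => (hline t).differentiableAt) zero_le_one
    _ ≤ ∫⁻ t in Ioc (0 : ℝ) 1, ‖v‖ₑ * ‖fderiv ℝ g (x + t • v)‖ₑ :=
        lintegral_mono fun t => by
          rw [mul_comm]; exact (fderiv ℝ g (x + t • v)).le_opENorm v
    _ = ‖v‖ₑ * ∫⁻ t in Ioc (0 : ℝ) 1, ‖fderiv ℝ g (x + t • v)‖ₑ :=
        lintegral_const_mul' _ _ enorm_ne_top

theorem enorm_integral_smul_comp_sub_sub_le {G : Type*} [AddGroup G] [MeasurableSpace G]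
    {ν : Measure G} {f : G → ℝ} {g : G → F}
    (hf : Integrable f ν) {x : G} (hfg : Integrable (fun y => f y • g (x - y)) ν) :
    ‖∫ y, f y • g (x - y) ∂ν - (∫ y, f y ∂ν) • g x‖ₑ ≤
      ∫⁻ y, ‖f y‖ₑ * ‖g (x - y) - g x‖ₑ ∂ν := by
  rw [← integral_smul_const, ← integral_sub hfg (hf.smul_const _)]
  refine (enorm_integral_le_lintegral_enorm _).trans_eq (lintegral_congr fun y => ?_)
  rw [← smul_sub, enorm_smul]

variable [FiniteDimensional ℝ E] [MeasurableSpace E] [BorelSpace E]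
  {μ : Measure E} [SFinite μ] [μ.IsAddRightInvariant]

theorem lintegral_enorm_add_sub_le_mul_lintegral_fderiv {g : E → F} (hg : Differentiable ℝ g)
    (v : E) :
    ∫⁻ x, ‖g (x + v) - g x‖ₑ ∂μ ≤ ‖v‖ₑ * ∫⁻ x, ‖fderiv ℝ g x‖ₑ ∂μ := by
  have hmeas : Measurable fun p : E × ℝ => ‖fderiv ℝ g (p.1 + p.2 • v)‖ₑ :=
    ((measurable_fderiv ℝ g).comp (by fun_prop)).enorm
  calc ∫⁻ x, ‖g (x + v) - g x‖ₑ ∂μ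
      ≤ ∫⁻ x, ‖v‖ₑ * (∫⁻ t in Ioc (0 : ℝ) 1, ‖fderiv ℝ g (x + t • v)‖ₑ) ∂μ :=
        lintegral_mono fun x => enorm_add_sub_le_mul_lintegral_fderiv hg x v
    _ = ‖v‖ₑ * ∫⁻ t in Ioc (0 : ℝ) 1, (∫⁻ x, ‖fderiv ℝ g (x + t • v)‖ₑ ∂μ) := by
        rw [lintegral_const_mul' _ _ enorm_ne_top,
          lintegral_lintegral_swap hmeas.aemeasurable]
    _ = ‖v‖ₑ * ∫⁻ x, ‖fderiv ℝ g x‖ₑ ∂μ := by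
        simp_rw [lintegral_add_right_eq_self (fun x => ‖fderiv ℝ g x‖ₑ)]
        simp

theorem lintegral_enorm_convolution_sub_le {f : E → ℝ} {g : E → F} (hf : Integrable f μ)
    (hg : Integrable g μ) (hgd : Differentiable ℝ g) :
    ∫⁻ x, ‖∫ y, f y • g (x - y) ∂μ - (∫ y, f y ∂μ) • g x‖ₑ ∂μ ≤
      (∫⁻ y, ‖y‖ₑ * ‖f y‖ₑ ∂μ) * ∫⁻ x, ‖fderiv ℝ g x‖ₑ ∂μ := by
  have hconv : ∀ᵐ x ∂μ, Integrable (fun y => f y • g (x - y)) μ :=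
    hf.ae_convolution_exists (ContinuousLinearMap.lsmul ℝ ℝ) hg
  have hgc := hgd.continuous
  have hmeas : AEMeasurable (fun p : E × E => ‖f p.2‖ₑ * ‖g (p.1 - p.2) - g p.1‖ₑ)
      (μ.prod μ) :=
    hf.aemeasurable.comp_snd.enorm.mul (by fun_prop)
  calc ∫⁻ x, ‖∫ y, f y • g (x - y) ∂μ - (∫ y, f y ∂μ) • g x‖ₑ ∂μ
      ≤ ∫⁻ x, ∫⁻ y, ‖f y‖ₑ * ‖g (x - y) - g x‖ₑ ∂μ ∂μ :=
        lintegral_mono_ae (hconv.mono fun x hx => enorm_integral_smul_comp_sub_sub_le hf hx)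
    _ = ∫⁻ y, ‖f y‖ₑ * ∫⁻ x, ‖g (x - y) - g x‖ₑ ∂μ ∂μ := by
        rw [lintegral_lintegral_swap hmeas]
        exact lintegral_congr fun y => lintegral_const_mul' _ _ enorm_ne_top
    _ ≤ ∫⁻ y, ‖f y‖ₑ * (‖y‖ₑ * ∫⁻ x, ‖fderiv ℝ g x‖ₑ ∂μ) ∂μ := by
        gcongr with y
        simpa [← sub_eq_add_neg] using
          lintegral_enorm_add_sub_le_mul_lintegral_fderiv (μ := μ) hgd (-y)
    _ = (∫⁻ y, ‖y‖ₑ * ‖f y‖ₑ ∂μ) * ∫⁻ x, ‖fderiv ℝ g x‖ₑ ∂μ := by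
        rw [← lintegral_mul_const'' _ (by fun_prop)]
        simp_rw [mul_left_comm, mul_assoc]

theorem integral_norm_convolution_sub_le {f : E → ℝ} {g : E → F} (hf : Integrable f μ)
    (hfx : Integrable (fun x => ‖x‖ * ‖f x‖) μ) (hg : Integrable g μ) (hgd : Differentiable ℝ g)
    (hg' : Integrable (fun x => ‖fderiv ℝ g x‖) μ) :
    ∫ x, ‖∫ y, f y • g (x - y) ∂μ - (∫ y, f y ∂μ) • g x‖ ∂μ ≤
      (∫ x, ‖fderiv ℝ g x‖ ∂μ) * ∫ x, ‖x‖ * ‖f x‖ ∂μ := by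
  have hF : AEStronglyMeasurable
      (fun x => ∫ y, f y • g (x - y) ∂μ - (∫ y, f y ∂μ) • g x) μ :=
    (hf.aestronglyMeasurable.convolution_integrand (ContinuousLinearMap.lsmul ℝ ℝ)
      hg.aestronglyMeasurable).integral_prod_right'.sub (hg.aestronglyMeasurable.const_smul _)
  have hmoment : ∫⁻ y, ‖y‖ₑ * ‖f y‖ₑ ∂μ = ENNReal.ofReal (∫ x, ‖x‖ * ‖f x‖ ∂μ) := by
    rw [ofReal_integral_eq_lintegral_ofReal hfx (.of_forall fun x => by positivity)]
    simp_rw [ENNReal.ofReal_mul (norm_nonneg _), ofReal_norm]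
  have hgrad : ∫⁻ x, ‖fderiv ℝ g x‖ₑ ∂μ = ENNReal.ofReal (∫ x, ‖fderiv ℝ g x‖ ∂μ) := by
    rw [ofReal_integral_eq_lintegral_ofReal hg' (.of_forall fun x => norm_nonneg _)]
    simp_rw [ofReal_norm]
  rw [integral_norm_eq_lintegral_enorm hF]
  calc (∫⁻ x, ‖∫ y, f y • g (x - y) ∂μ - (∫ y, f y ∂μ) • g x‖ₑ ∂μ).toReal
      ≤ ((∫⁻ y, ‖y‖ₑ * ‖f y‖ₑ ∂μ) * ∫⁻ x, ‖fderiv ℝ g x‖ₑ ∂μ).toReal := by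
        refine ENNReal.toReal_mono ?_ (lintegral_enorm_convolution_sub_le hf hg hgd)
        rw [hmoment, hgrad]
        exact ENNReal.mul_ne_top ENNReal.ofReal_ne_top ENNReal.ofReal_ne_top
    _ = (∫ x, ‖fderiv ℝ g x‖ ∂μ) * ∫ x, ‖x‖ * ‖f x‖ ∂μ := by
        rw [ENNReal.toReal_mul, hmoment, hgrad, ENNReal.toReal_ofReal (by positivity),
          ENNReal.toReal_ofReal (by positivity), mul_comm]

/-- Convolution approximation estimate: there is a constant `C` such that for all
`f ∈ L¹(ℝⁿ, (1+|x|)dx)` and all `g ∈ W^{1,1}(ℝⁿ)`,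
`‖f*g − (∫ f) g‖_{L¹} ≤ C ‖∇g‖_{L¹} ‖f‖_{L¹(|x|dx)}`. -/
theorem convolution_approximation_estimate (n : ℕ) :
    ∃ C : ℝ, 0 < C ∧
      ∀ f g : EuclideanSpace ℝ (Fin n) → ℝ,
        Integrable f volume →
        Integrable (fun x => ‖x‖ * |f x|) volume →
        Integrable g volume →
        Differentiable ℝ g →
        Integrable (fun x => ‖fderiv ℝ g x‖) volume →
        ∫ x, |(∫ y, f y * g (x - y)) - (∫ y, f y) * g x| ≤
          C * (∫ x, ‖fderiv ℝ g x‖) * ∫ x, ‖x‖ * |f x| := by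
  refine ⟨1, one_pos, fun f g hf hfx hg hgd hg' => ?_⟩
  simpa only [one_mul, smul_eq_mul, Real.norm_eq_abs] using
    integral_norm_convolution_sub_le hf (by simpa only [Real.norm_eq_abs] using hfx) hg hgd hg'
end
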